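/- arXiv:2503.12644 — 2 statements merged into one kernel-verified Lean document; each statement's English description precedes it below -/
import Mathlib

section
/- For nonnegative integers n and p, the rescaled Laguerre polynomials satisfy the p ↔ n symmetry: n! · x^{(p−n)/2} · (−1)^n L_n^{(p−n)}(x) = p! · x^{(n−p)/2} · (−1)^p L_p^{(n−p)}(x) for all x > 0. -/
open Real Finset

/-- The generalized Laguerre polynomial `L_n^{(α)}(x)` for arbitrary real parameter `α`,
defined by `L_n^{(α)}(x) = Σ_{k=0}^n (−1)^k binom(n+α, n−k) x^k / k!`, where the generalized
binomial coefficient is `binom(n+α, n−k) = (α+k+1)⋯(α+n)/(n−k)!`. -/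
noncomputable def laguerreL (n : ℕ) (α : ℝ) (x : ℝ) : ℝ :=
  ∑ k ∈ Finset.range (n + 1),
    (-1 : ℝ) ^ k * (∏ i ∈ Finset.Ico k n, (α + i + 1)) /
      ((Nat.factorial (n - k) : ℝ) * (Nat.factorial k : ℝ)) * x ^ k

private lemma fac_prod (m a b : ℕ) (h : a ≤ b) :
    ((m + a).factorial : ℝ) * ∏ i ∈ Finset.Ico a b, ((m : ℝ) + i + 1)
      = ((m + b).factorial : ℝ) := by
  induction b, h using Nat.le_induction with
  | base => simp
  | succ b hb ih =>
    rw [Finset.prod_Ico_succ_top hb, ← mul_assoc, ih]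
    have : (m + (b + 1)).factorial = (m + b).factorial * (m + b + 1) := by
      rw [show m + (b + 1) = (m + b) + 1 by ring, Nat.factorial_succ]; ring
    rw [this]; push_cast; ring

private lemma shift_prod (m a b : ℕ) :
    ∏ i ∈ Finset.Ico (m + a) (m + b), (-(m : ℝ) + i + 1)
      = ∏ i ∈ Finset.Ico a b, ((i : ℝ) + 1) := by
  rw [Finset.prod_Ico_eq_prod_range, Finset.prod_Ico_eq_prod_range]
  have : m + b - (m + a) = b - a := by omega
  rw [this]
  refine Finset.prod_congr rfl fun i _ => ?_
  push_cast; ring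

private lemma key (n p : ℕ) (h : n ≤ p) (x : ℝ) :
    (n.factorial : ℝ) * (-1 : ℝ) ^ n * x ^ (p - n) * laguerreL n ((p : ℝ) - n) x
      = (p.factorial : ℝ) * (-1 : ℝ) ^ p * laguerreL p ((n : ℝ) - p) x := by
  set m := p - n with hm
  have hp : p = m + n := by omega
  have hα2 : (n : ℝ) - (p : ℝ) = -(m : ℝ) := by rw [hp]; push_cast; ring
  have hα1 : (p : ℝ) - (n : ℝ) = (m : ℝ) := by rw [hp]; push_cast; ring
  unfold laguerreL
  rw [hα1, hα2]
  have hsub : Finset.Ico m (p + 1) ⊆ Finset.range (p + 1) := by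
    intro j hj; simp only [Finset.mem_Ico] at hj; simp only [Finset.mem_range]; omega
  have hzero : ∀ j ∈ Finset.range (p + 1), j ∉ Finset.Ico m (p + 1) →
      (-1 : ℝ) ^ j * (∏ i ∈ Finset.Ico j p, (-(m : ℝ) + i + 1)) /
        ((Nat.factorial (p - j) : ℝ) * (Nat.factorial j : ℝ)) * x ^ j = 0 := by
    intro j hj hj'
    have hjm : j < m := by
      simp only [Finset.mem_range] at hj
      simp only [Finset.mem_Ico] at hj'
      omega
    have hmem : m - 1 ∈ Finset.Ico j p := by
      simp only [Finset.mem_Ico]; omega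
    have hz : ∏ i ∈ Finset.Ico j p, (-(m : ℝ) + i + 1) = 0 := by
      apply Finset.prod_eq_zero hmem
      have h1 : ((m - 1 : ℕ) : ℝ) = (m : ℝ) - 1 := by
        have : 1 ≤ m := by omega
        push_cast [Nat.cast_sub this]; ring
      rw [h1]; ring
    rw [hz]; simp
  rw [← Finset.sum_subset hsub hzero, Finset.sum_Ico_eq_sum_range,
    show p + 1 - m = n + 1 by omega]
  simp only [Finset.mul_sum]
  refine Finset.sum_congr rfl fun k hk => ?_
  have hkn : k ≤ n := by simpa [Nat.lt_succ_iff] using hk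
  have hpk : p - (m + k) = n - k := by omega
  rw [hpk, hp, shift_prod m k n]
  have E1 := fac_prod m k n hkn
  have E2 := fac_prod 0 k n hkn
  simp only [Nat.cast_zero, zero_add, Nat.cast_ofNat] at E2
  have hf1 : ((m + k).factorial : ℝ) ≠ 0 := Nat.cast_ne_zero.mpr (Nat.factorial_ne_zero _)
  have hf2 : ((n - k).factorial : ℝ) ≠ 0 := Nat.cast_ne_zero.mpr (Nat.factorial_ne_zero _)
  have hf3 : (k.factorial : ℝ) ≠ 0 := Nat.cast_ne_zero.mpr (Nat.factorial_ne_zero _)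
  have hP1 : ∏ i ∈ Finset.Ico k n, ((m : ℝ) + i + 1)
      = ((m + n).factorial : ℝ) / ((m + k).factorial : ℝ) := by
    rw [eq_div_iff hf1]; linarith [E1]
  have hP2 : ∏ i ∈ Finset.Ico k n, ((i : ℝ) + 1)
      = (n.factorial : ℝ) / (k.factorial : ℝ) := by
    rw [eq_div_iff hf3]; linarith [E2]
  rw [hP1, hP2, pow_add x m k, pow_add ((-1 : ℝ)) m k, pow_add ((-1 : ℝ)) m n]
  have hs : (-1 : ℝ) ^ m * (-1 : ℝ) ^ m = 1 := by
    rw [← pow_add, ← two_mul]; exact Even.neg_one_pow (even_two_mul m)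
  field_simp
  ring_nf
  have hs2 : (-1 : ℝ) ^ (m * 2) = 1 := Even.neg_one_pow ⟨m, by ring⟩
  rw [hs2]; ring

theorem stmt2 (n p : ℕ) (x : ℝ) (hx : 0 < x) :
    (n.factorial : ℝ) * x ^ (((p : ℝ) - n) / 2) * (-1 : ℝ) ^ n * laguerreL n ((p : ℝ) - n) x
      = (p.factorial : ℝ) * x ^ (((n : ℝ) - p) / 2) * (-1 : ℝ) ^ p *
          laguerreL p ((n : ℝ) - p) x := by
  have main : ∀ n p : ℕ, n ≤ p →
      (n.factorial : ℝ) * x ^ (((p : ℝ) - n) / 2) * (-1 : ℝ) ^ n * laguerreL n ((p : ℝ) - n) x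
        = (p.factorial : ℝ) * x ^ (((n : ℝ) - p) / 2) * (-1 : ℝ) ^ p *
            laguerreL p ((n : ℝ) - p) x := by
    intro n p h
    have hxp : x ^ (((p : ℝ) - n) / 2) = x ^ (((n : ℝ) - p) / 2) * x ^ (p - n) := by
      rw [← Real.rpow_natCast x (p - n), ← Real.rpow_add hx]
      congr 1
      rw [Nat.cast_sub h]; ring
    rw [hxp]
    linear_combination x ^ (((n : ℝ) - p) / 2) * key n p h x
  rcases le_total n p with h | h
  · exact main n p h
  · exact (main p n h).symm
end

section
/- For every real α > −1 and nonnegative integer n, ∫_0^∞ e^{−x/2} x^{(α−1)/2} L_n^{(α)}(x) dx equals 2^{(α+1)/2} Γ((n+α+1)/2) / Γ(n/2 + 1) when n is even, and equals 0 when n is odd. -/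
open Real Finset MeasureTheory

noncomputable def poch (c : ℝ) : ℕ → ℝ
  | 0 => 1
  | k+1 => poch c k * (c + k)

lemma poch_succ (c : ℝ) (k : ℕ) : poch c (k+1) = poch c k * (c + k) := rfl

lemma poch_base (c : ℝ) (k : ℕ) : poch c (k+1) = c * poch (c+1) k := by
  induction k with
  | zero => simp [poch]
  | succ k ih => rw [poch_succ, ih, poch_succ]; push_cast; ring

lemma poch_eq_prod (x : ℝ) (s : ℕ) : poch x s = ∏ t ∈ range s, (x + t) := by
  induction s with
  | zero => simp [poch]
  | succ s ih => rw [poch_succ, ih, Finset.prod_range_succ]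

noncomputable def sT (c : ℝ) (n k : ℕ) : ℝ :=
  (-2)^k * poch c k * poch (2*c+k) (n-k) * (n.choose k)

noncomputable def hT (c : ℝ) (n k : ℕ) : ℝ :=
  (-2)^(k+1) * poch c (k+1) * poch (2*c+k) (n+1-k) * ((n+1).choose k)

noncomputable def fT (c : ℝ) (n : ℕ) : ℕ → ℝ
  | 0 => 0
  | k+1 => -hT c n k

noncomputable def Ss (c : ℝ) (n : ℕ) : ℝ := ∑ k ∈ range (n+1), sT c n k

set_option maxHeartbeats 2000000 in
lemma key_s4 (c : ℝ) (n k : ℕ) (hk : k ≤ n + 2) :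
    sT c (n+2) k - (n+1)*(2*c+n) * sT c n k = fT c n (k+1) - fT c n k := by
  match k with
  | 0 =>
    simp only [sT, hT, fT, Nat.sub_zero, Nat.choose_zero_right, Nat.cast_zero, Nat.cast_one,
      add_zero, pow_zero, pow_one]
    rw [show n + 2 = (n+1)+1 from rfl, poch_succ, poch_succ, poch_succ]
    push_cast
    ring
  | (j+1) =>
    rcases Nat.lt_or_ge (j+1) (n+1) with h | h
    · -- j+1 ≤ n
      have hle : j + 1 ≤ n := by omega
      obtain ⟨m, rfl⟩ := Nat.exists_eq_add_of_le hle
      simp only [sT, hT, fT]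
      rw [show j + 1 + m + 2 - (j+1) = m + 2 from by omega,
          show j + 1 + m - (j+1) = m from by omega,
          show j + 1 + m + 1 - (j+1) = m + 1 from by omega,
          show j + 1 + m + 1 - j = m + 2 from by omega]
      rw [Nat.cast_choose ℝ (by omega : j+1 ≤ j+1+m+2),
          Nat.cast_choose ℝ (by omega : j+1 ≤ j+1+m),
          Nat.cast_choose ℝ (by omega : j ≤ j+1+m+1),
          Nat.cast_choose ℝ (by omega : j+1 ≤ j+1+m+1)]
      rw [show j + 1 + m + 2 - (j+1) = m + 2 from by omega,
          show j + 1 + m - (j+1) = m from by omega,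
          show j + 1 + m + 1 - j = m + 2 from by omega,
          show j + 1 + m + 1 - (j+1) = m + 1 from by omega]
      -- uniformize poch bases
      rw [show (2*c + (↑(j+1):ℝ)) = 2*c + (j:ℝ) + 1 from by push_cast; ring]
      rw [poch_base (2*c + (j:ℝ)) (m+1)]
      -- expand all pochs down to atoms `poch c j` and `poch (2*c+↑j+1) m`
      rw [show m + 2 = (m+1)+1 from rfl, show j + 2 = (j+1)+1 from rfl]
      simp only [poch_succ]
      -- expand factorials
      rw [show j + 1 + m + 2 = (j+1+m+1)+1 from rfl, Nat.factorial_succ (j+1+m+1),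
          show j + 1 + m + 1 = (j+1+m)+1 from rfl, Nat.factorial_succ (j+1+m),
          Nat.factorial_succ (m+1), Nat.factorial_succ m, Nat.factorial_succ j]
      have hf1 : ((j+1+m).factorial : ℝ) ≠ 0 := Nat.cast_ne_zero.mpr (Nat.factorial_ne_zero _)
      have hf2 : ((j).factorial : ℝ) ≠ 0 := Nat.cast_ne_zero.mpr (Nat.factorial_ne_zero _)
      have hf3 : ((m).factorial : ℝ) ≠ 0 := Nat.cast_ne_zero.mpr (Nat.factorial_ne_zero _)
      have hx1 : ((j:ℝ)+1) ≠ 0 := by positivity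
      have hm1 : ((m:ℝ)+1) ≠ 0 := by positivity
      have hm2 : ((m:ℝ)+2) ≠ 0 := by positivity
      push_cast
      field_simp
      ring
    · rcases Nat.lt_or_ge (j+1) (n+2) with h2 | h2
      · -- j+1 = n+1
        have hj : j = n := by omega
        subst hj
        simp only [sT, hT, fT]
        rw [show j + 2 - (j+1) = 1 from by omega, show j - (j+1) = 0 from by omega,
            show j + 1 - (j+1) = 0 from by omega, show j + 1 - j = 1 from by omega,
            show j + 2 = (j+1)+1 from rfl, Nat.choose_succ_self_right,
            Nat.choose_succ_self, Nat.choose_self, Nat.choose_succ_self_right]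
        simp only [poch, pow_succ]
        push_cast
        ring
      · -- j+1 = n+2
        have hj : j = n + 1 := by omega
        subst hj
        simp only [sT, hT, fT]
        rw [show n + 2 - (n+1+1) = 0 from by omega, show n - (n+1+1) = 0 from by omega,
            show n + 1 - (n+1+1) = 0 from by omega, show n + 1 - (n+1) = 0 from by omega,
            show n + 2 = (n+1)+1 from rfl, Nat.choose_self,
            show n.choose (n+1+1) = 0 from Nat.choose_eq_zero_of_lt (by omega),
            show (n+1).choose (n+1+1) = 0 from Nat.choose_eq_zero_of_lt (by omega),
            Nat.choose_self]
        simp only [poch]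
        push_cast
        ring

lemma sT_zero_of_gt (c : ℝ) {n k : ℕ} (h : n < k) : sT c n k = 0 := by
  simp [sT, Nat.choose_eq_zero_of_lt h]

lemma Ss_rec (c : ℝ) (n : ℕ) : Ss c (n+2) = (n+1) * (2*c+n) * Ss c n := by
  have hS : Ss c n = ∑ k ∈ range (n+3), sT c n k := by
    rw [Ss]
    apply Finset.sum_subset (Finset.range_subset_range.mpr (by omega))
    intro k hk hk2
    exact sT_zero_of_gt c (by simp at hk hk2 ⊢; omega)
  have h2 : ∑ k ∈ range (n+3), (sT c (n+2) k - (n+1)*(2*c+n) * sT c n k)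
      = fT c n (n+3) - fT c n 0 := by
    rw [← Finset.sum_range_sub (fT c n)]
    exact Finset.sum_congr rfl fun k hk => key_s4 c n k (by simp at hk; omega)
  have h3 : fT c n (n+3) = 0 := by
    simp [fT, hT, Nat.choose_eq_zero_of_lt (show n+1 < n+2 from by omega)]
  rw [Finset.sum_sub_distrib, ← Finset.mul_sum, h3, fT] at h2
  have h4 : Ss c (n+2) = ∑ k ∈ range (n+3), sT c (n+2) k := rfl
  rw [h4, hS]
  linarith [h2]

lemma Ss_even (c : ℝ) (m : ℕ) :
    Ss c (2*m) = (2*m).factorial / m.factorial * poch c m := by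
  induction m with
  | zero => simp [Ss, sT, poch]
  | succ m ih =>
    have : 2*(m+1) = 2*m+2 := by ring
    rw [this, Ss_rec, ih]
    have hf : (m.factorial : ℝ) ≠ 0 := Nat.cast_ne_zero.mpr (Nat.factorial_ne_zero _)
    have hf2 : ((m+1).factorial : ℝ) ≠ 0 := Nat.cast_ne_zero.mpr (Nat.factorial_ne_zero _)
    rw [show 2*m+2 = (2*m+1)+1 from rfl, Nat.factorial_succ ((2*m+1)),
        Nat.factorial_succ (2*m), Nat.factorial_succ m, poch_succ]
    push_cast
    field_simp
    ring

lemma Ss_odd (c : ℝ) (m : ℕ) : Ss c (2*m+1) = 0 := by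
  induction m with
  | zero =>
    simp [Ss, sT, poch, Finset.sum_range_succ]
  | succ m ih =>
    have : 2*(m+1)+1 = (2*m+1)+2 := by ring
    rw [this, Ss_rec, ih, mul_zero]

lemma Gamma_poch (c : ℝ) (hc : 0 < c) (k : ℕ) :
    Real.Gamma (c + k) = Real.Gamma c * poch c k := by
  induction k with
  | zero => simp [poch]
  | succ k ih =>
    have h1 : c + ((k:ℝ)+1) = (c + k) + 1 := by ring
    push_cast
    rw [h1, Real.Gamma_add_one (by positivity), ih, poch_succ]
    ring

lemma prod_Ico_eq_poch (α : ℝ) (k n : ℕ) :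
    ∏ i ∈ Finset.Ico k n, (α + i + 1) = poch (α + 1 + k) (n - k) := by
  rw [Finset.prod_Ico_eq_prod_range, poch_eq_prod]
  refine Finset.prod_congr rfl fun t ht => ?_
  push_cast
  ring

lemma integrable_aux {a : ℝ} (ha : 0 < a) :
    IntegrableOn (fun x : ℝ => x ^ (a - 1) * Real.exp (-(1/2*x))) (Set.Ioi 0) := by
  have h := integrableOn_rpow_mul_exp_neg_mul_rpow (p := 1) (s := a - 1) (b := 1/2)
    (by linarith) (by norm_num) (by norm_num)
  simpa [Real.rpow_one] using h

lemma integral_aux {a : ℝ} (ha : 0 < a) :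
    ∫ x in Set.Ioi (0:ℝ), x ^ (a - 1) * Real.exp (-(1/2*x)) = 2 ^ a * Real.Gamma a := by
  have h := Real.integral_rpow_mul_exp_neg_mul_Ioi ha (r := 1/2) (by norm_num)
  rw [show ((1:ℝ)/(1/2)) = 2 from by norm_num] at h
  exact h


set_option maxHeartbeats 1000000 in
theorem stmt4 (α : ℝ) (hα : -1 < α) (n : ℕ) :
    (Even n →
      ∫ x in Set.Ioi (0 : ℝ), Real.exp (-x / 2) * x ^ ((α - 1) / 2) * laguerreL n α x
        = 2 ^ ((α + 1) / 2) * Real.Gamma (((n : ℝ) + α + 1) / 2) /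
            Real.Gamma ((n : ℝ) / 2 + 1)) ∧
    (Odd n →
      ∫ x in Set.Ioi (0 : ℝ), Real.exp (-x / 2) * x ^ ((α - 1) / 2) * laguerreL n α x = 0) := by
  set c := (α+1)/2 with hc_def
  have hc : 0 < c := by rw [hc_def]; linarith
  have hfac : ∀ m : ℕ, ((m.factorial : ℝ)) ≠ 0 :=
    fun m => Nat.cast_ne_zero.mpr (Nat.factorial_ne_zero _)
  have hmain : ∫ x in Set.Ioi (0:ℝ), Real.exp (-x/2) * x ^ ((α-1)/2) * laguerreL n α x
      = 2 ^ c * Real.Gamma c / n.factorial * Ss c n := by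
    have hEq : Set.EqOn
        (fun x : ℝ => Real.exp (-x/2) * x ^ ((α-1)/2) * laguerreL n α x)
        (fun x : ℝ => ∑ k ∈ Finset.range (n+1),
          ((-1:ℝ)^k * poch (2*c+k) (n-k) / ((n-k).factorial * k.factorial)) *
            (x ^ (c + k - 1) * Real.exp (-(1/2*x)))) (Set.Ioi 0) := by
      intro x hx
      have hx0 : 0 < x := hx
      simp only [laguerreL, Finset.mul_sum]
      refine Finset.sum_congr rfl fun k hk => ?_
      rw [prod_Ico_eq_poch, show α + 1 + (k:ℝ) = 2*c + k from by rw [hc_def]; ring]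
      rw [← Real.rpow_natCast x k]
      have h1 : x ^ ((α-1)/2) * x ^ (k:ℝ) = x ^ (c + k - 1) := by
        rw [← Real.rpow_add hx0]
        congr 1
        rw [hc_def]; ring
      have h2 : Real.exp (-x/2) = Real.exp (-(1/2*x)) := by ring_nf
      calc Real.exp (-x/2) * x ^ ((α-1)/2) *
            ((-1:ℝ)^k * poch (2*c+k) (n-k) / ((n-k).factorial * k.factorial) * x ^ (k:ℝ))
          = ((-1:ℝ)^k * poch (2*c+k) (n-k) / ((n-k).factorial * k.factorial)) *
            ((x ^ ((α-1)/2) * x ^ (k:ℝ)) * Real.exp (-x/2)) := by ring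
        _ = _ := by rw [h1, h2]
    rw [setIntegral_congr_fun measurableSet_Ioi hEq]
    rw [MeasureTheory.integral_finset_sum _ (fun k hk => by
      exact ((integrable_aux (show (0:ℝ) < c + k from by positivity)).const_mul _))]
    simp_rw [integral_const_mul]
    rw [Ss, Finset.mul_sum]
    refine Finset.sum_congr rfl fun k hk => ?_
    have hkn : k ≤ n := by simp at hk; omega
    rw [show c + (k:ℝ) - 1 = (c + k) - 1 from by ring,
        integral_aux (show (0:ℝ) < c + k from by positivity),
        Gamma_poch c hc k, Real.rpow_add (by norm_num : (0:ℝ) < 2), Real.rpow_natCast,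
        sT, Nat.cast_choose ℝ hkn,
        show ((-2:ℝ))^k = (-1:ℝ)^k * 2^k from by rw [← neg_one_mul, mul_pow]]
    field_simp
  constructor
  · rintro ⟨m, rfl⟩
    rw [show m + m = 2*m from by ring] at hmain ⊢
    rw [hmain, Ss_even]
    rw [show (((2*m:ℕ):ℝ) + α + 1)/2 = c + m from by push_cast; rw [hc_def]; ring,
        Gamma_poch c hc m,
        show ((2*m:ℕ):ℝ)/2 + 1 = (m:ℝ) + 1 from by push_cast; ring,
        Real.Gamma_nat_eq_factorial]
    field_simp
  · rintro ⟨m, rfl⟩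
    rw [hmain, Ss_odd, mul_zero]
end
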